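/- arXiv:1907.05915 — 2 statements merged into one kernel-verified Lean document; each statement's English description precedes it below -/
import Mathlib

section
/- (Converse part of Sklar's theorem, bivariate case) Let C be a copula and let F, G : ℝ → [0,1] be (one-dimensional) cumulative distribution functions (monotone nondecreasing, right-continuous, with limit 0 at −∞ and 1 at +∞). Then H(x,y) := C(F(x), G(y)) is a two-dimensional distribution function with marginal distribution functions F and G; in particular H is 2-increasing (H(x₂,y₂) − H(x₂,y₁) − H(x₁,y₂) + H(x₁,y₁) ≥ 0 for x₁ ≤ x₂, y₁ ≤ y₂), H(x,y) → 0 as x → −∞ or y → −∞, H(x,y) → 1 as both x,y → +∞, and lim_{y→+∞} H(x,y) = F(x), lim_{x→+∞} H(x,y) = G(y). -/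
/-- A bivariate copula: a function `C : [0,1] × [0,1] → [0,1]` (here given as a
real function whose relevant behavior is on `[0,1]²`) satisfying the groundedness,
margin uniformity, and 2-increasing conditions. -/
def IsCopula (C : ℝ → ℝ → ℝ) : Prop :=
  (∀ u ∈ Set.Icc (0:ℝ) 1, ∀ v ∈ Set.Icc (0:ℝ) 1, C u v ∈ Set.Icc (0:ℝ) 1) ∧
  (∀ v ∈ Set.Icc (0:ℝ) 1, C 0 v = 0) ∧
  (∀ u ∈ Set.Icc (0:ℝ) 1, C u 0 = 0) ∧
  (∀ v ∈ Set.Icc (0:ℝ) 1, C 1 v = v) ∧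
  (∀ u ∈ Set.Icc (0:ℝ) 1, C u 1 = u) ∧
  (∀ u₁ ∈ Set.Icc (0:ℝ) 1, ∀ u₂ ∈ Set.Icc (0:ℝ) 1, ∀ v₁ ∈ Set.Icc (0:ℝ) 1, ∀ v₂ ∈ Set.Icc (0:ℝ) 1,
    u₁ ≤ u₂ → v₁ ≤ v₂ → 0 ≤ C u₂ v₂ - C u₂ v₁ - C u₁ v₂ + C u₁ v₁)

/-- Converse part of Sklar's theorem (bivariate case): if `C` is a copula and
`F, G` are one-dimensional distribution functions, then `H(x,y) = C(F(x), G(y))`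
is a two-dimensional distribution function with margins `F` and `G`. -/
theorem sklar_converse (C : ℝ → ℝ → ℝ) (hC : IsCopula C) (F G : ℝ → ℝ)
    (hFmem : ∀ x, F x ∈ Set.Icc (0:ℝ) 1) (hGmem : ∀ y, G y ∈ Set.Icc (0:ℝ) 1)
    (hFmono : Monotone F) (hGmono : Monotone G)
    (hFrc : ∀ x, ContinuousWithinAt F (Set.Ici x) x)
    (hGrc : ∀ y, ContinuousWithinAt G (Set.Ici y) y)
    (hFbot : Filter.Tendsto F Filter.atBot (nhds 0))
    (hFtop : Filter.Tendsto F Filter.atTop (nhds 1))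
    (hGbot : Filter.Tendsto G Filter.atBot (nhds 0))
    (hGtop : Filter.Tendsto G Filter.atTop (nhds 1)) :
    (∀ x₁ x₂ y₁ y₂ : ℝ, x₁ ≤ x₂ → y₁ ≤ y₂ →
      0 ≤ C (F x₂) (G y₂) - C (F x₂) (G y₁) - C (F x₁) (G y₂) + C (F x₁) (G y₁)) ∧
    (∀ y, Filter.Tendsto (fun x => C (F x) (G y)) Filter.atBot (nhds 0)) ∧
    (∀ x, Filter.Tendsto (fun y => C (F x) (G y)) Filter.atBot (nhds 0)) ∧
    Filter.Tendsto (fun p : ℝ × ℝ => C (F p.1) (G p.2))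
      (Filter.atTop ×ˢ Filter.atTop) (nhds 1) ∧
    (∀ x, Filter.Tendsto (fun y => C (F x) (G y)) Filter.atTop (nhds (F x))) ∧
    (∀ y, Filter.Tendsto (fun x => C (F x) (G y)) Filter.atTop (nhds (G y))) := by

  obtain ⟨hmem, h0v, hu0, h1v, hu1, h2⟩ := hC
  have h01 : (0:ℝ) ∈ Set.Icc (0:ℝ) 1 := by constructor <;> norm_num
  have h11 : (1:ℝ) ∈ Set.Icc (0:ℝ) 1 := by constructor <;> norm_num
  -- basic bounds
  have hnn : ∀ x y, 0 ≤ C (F x) (G y) := fun x y => (hmem _ (hFmem x) _ (hGmem y)).1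
  have hle1 : ∀ x y, C (F x) (G y) ≤ 1 := fun x y => (hmem _ (hFmem x) _ (hGmem y)).2
  -- C u v ≤ u and C u v ≤ v
  have hleu : ∀ u ∈ Set.Icc (0:ℝ) 1, ∀ v ∈ Set.Icc (0:ℝ) 1, C u v ≤ u := by
    intro u hu v hv
    have := h2 0 h01 u hu v hv 1 h11 hu.1 hv.2
    have e1 := hu1 u hu
    have e2 := h0v v hv
    have e3 := h0v 1 h11
    linarith
  have hlev : ∀ u ∈ Set.Icc (0:ℝ) 1, ∀ v ∈ Set.Icc (0:ℝ) 1, C u v ≤ v := by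
    intro u hu v hv
    have := h2 u hu 1 h11 0 h01 v hv hu.2 hv.1
    have e1 := h1v v hv
    have e2 := hu0 u hu
    have e3 := h1v 0 h01
    linarith
  -- lower Fréchet bound: u + v - 1 ≤ C u v
  have hfre : ∀ u ∈ Set.Icc (0:ℝ) 1, ∀ v ∈ Set.Icc (0:ℝ) 1, u + v - 1 ≤ C u v := by
    intro u hu v hv
    have := h2 u hu 1 h11 v hv 1 h11 hu.2 hv.2
    have e1 := h1v v hv
    have e2 := h1v 1 h11
    have e3 := hu1 u hu
    linarith
  refine ⟨?_, ?_, ?_, ?_, ?_, ?_⟩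
  · intro x₁ x₂ y₁ y₂ hx hy
    exact h2 _ (hFmem x₁) _ (hFmem x₂) _ (hGmem y₁) _ (hGmem y₂)
      (hFmono hx) (hGmono hy)
  · intro y
    refine squeeze_zero (fun x => hnn x y) (fun x => hleu _ (hFmem x) _ (hGmem y)) hFbot
  · intro x
    refine squeeze_zero (fun y => hnn x y) (fun y => hlev _ (hFmem x) _ (hGmem y)) hGbot
  · have hlow : Filter.Tendsto (fun p : ℝ × ℝ => F p.1 + G p.2 - 1)
        (Filter.atTop ×ˢ Filter.atTop) (nhds 1) := by
      have := ((hFtop.comp Filter.tendsto_fst).add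
        (hGtop.comp Filter.tendsto_snd)).sub (tendsto_const_nhds (x := (1:ℝ)))
      simpa using this
    refine tendsto_of_tendsto_of_tendsto_of_le_of_le hlow tendsto_const_nhds
      (fun p => hfre _ (hFmem p.1) _ (hGmem p.2)) (fun p => hle1 p.1 p.2)
  · intro x
    have hlow : Filter.Tendsto (fun y => F x + G y - 1) Filter.atTop (nhds (F x)) := by
      have := ((tendsto_const_nhds (x := F x)).add hGtop).sub
        (tendsto_const_nhds (x := (1:ℝ)))
      simpa using this
    refine tendsto_of_tendsto_of_tendsto_of_le_of_le hlow tendsto_const_nhds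
      (fun y => hfre _ (hFmem x) _ (hGmem y)) (fun y => hleu _ (hFmem x) _ (hGmem y))
  · intro y
    have hlow : Filter.Tendsto (fun x => F x + G y - 1) Filter.atTop (nhds (G y)) := by
      have := (hFtop.add (tendsto_const_nhds (x := G y))).sub
        (tendsto_const_nhds (x := (1:ℝ)))
      simpa using this
    refine tendsto_of_tendsto_of_tendsto_of_le_of_le hlow tendsto_const_nhds
      (fun x => hfre _ (hFmem x) _ (hGmem y)) (fun x => hlev _ (hFmem x) _ (hGmem y))
end

section
/- (Sklar's theorem, bivariate case with continuous margins) Let μ be a probability measure on ℝ × ℝ with joint distribution function H(x,y) = μ((−∞,x] × (−∞,y]), and let F(x) = μ((−∞,x] × ℝ) and G(y) = μ(ℝ × (−∞,y]) be its marginal distribution functions. If F and G are continuous, then there exists a unique copula C such that H(x,y) = C(F(x), G(y)) for all (x,y) ∈ ℝ². -/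
open MeasureTheory Set Filter
open scoped ENNReal

/-- Generalized inverse (quantile) of the cdf of `ν`. -/
noncomputable def sklarQ (ν : MeasureTheory.Measure ℝ) (u : ℝ) : ℝ :=
  sInf {x | u ≤ (ν (Set.Iic x)).toReal}

lemma sklar_tendsto_atBot (ν : Measure ℝ) [IsProbabilityMeasure ν] :
    Tendsto (fun x => (ν (Set.Iic x)).toReal) atBot (nhds 0) := by
  have h := ProbabilityTheory.tendsto_cdf_atBot ν
  simpa [funext fun x => ProbabilityTheory.cdf_eq_real (μ := ν) x, measureReal_def] using h

lemma sklar_tendsto_atTop (ν : Measure ℝ) [IsProbabilityMeasure ν] :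
    Tendsto (fun x => (ν (Set.Iic x)).toReal) atTop (nhds 1) := by
  have h := ProbabilityTheory.tendsto_cdf_atTop ν
  simpa [funext fun x => ProbabilityTheory.cdf_eq_real (μ := ν) x, measureReal_def] using h

lemma sklarQ_set_nonempty (ν : Measure ℝ) [IsProbabilityMeasure ν] {u : ℝ} (hu : u < 1) :
    {x | u ≤ (ν (Set.Iic x)).toReal}.Nonempty := by
  have h := (sklar_tendsto_atTop ν).eventually (eventually_ge_nhds hu)
  obtain ⟨x, hx⟩ := h.exists
  exact ⟨x, hx⟩

lemma sklarQ_set_bddBelow (ν : Measure ℝ) [IsProbabilityMeasure ν] {u : ℝ} (hu : 0 < u) :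
    BddBelow {x | u ≤ (ν (Set.Iic x)).toReal} := by
  have h := (sklar_tendsto_atBot ν).eventually (eventually_lt_nhds hu)
  obtain ⟨x₀, hx₀⟩ := h.exists_forall_of_atBot
  refine ⟨x₀, fun y hy => ?_⟩
  by_contra hlt
  push_neg at hlt
  exact absurd hy (not_le.mpr (hx₀ y hlt.le))

lemma sklarQ_mono (ν : Measure ℝ) [IsProbabilityMeasure ν]
    {u v : ℝ} (hu : 0 < u) (hv : v < 1) (huv : u ≤ v) :
    sklarQ ν u ≤ sklarQ ν v := by
  exact csInf_le_csInf (sklarQ_set_bddBelow ν hu) (sklarQ_set_nonempty ν hv)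
    (fun x hx => le_trans huv hx)

lemma sklarQ_cdf (ν : Measure ℝ) [IsProbabilityMeasure ν]
    (hcont : Continuous fun x => (ν (Set.Iic x)).toReal)
    {u : ℝ} (hu : 0 < u) (hu' : u < 1) :
    (ν (Set.Iic (sklarQ ν u))).toReal = u := by
  have hne := sklarQ_set_nonempty ν hu'
  have hbd := sklarQ_set_bddBelow ν hu
  have hclosed : IsClosed {x | u ≤ (ν (Set.Iic x)).toReal} :=
    isClosed_le continuous_const hcont
  have hmem : sklarQ ν u ∈ {x | u ≤ (ν (Set.Iic x)).toReal} :=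
    hclosed.csInf_mem hne hbd
  refine le_antisymm ?_ hmem
  have hle : ∀ x < sklarQ ν u, (ν (Set.Iic x)).toReal ≤ u := by
    intro x hx
    by_contra h
    push_neg at h
    exact absurd (csInf_le hbd (le_of_lt h : u ≤ _)) (not_le.mpr hx)
  have ht : Tendsto (fun x => (ν (Set.Iic x)).toReal)
      (nhdsWithin (sklarQ ν u) (Set.Iio (sklarQ ν u)))
      (nhds ((ν (Set.Iic (sklarQ ν u))).toReal)) :=
    (hcont.continuousAt).continuousWithinAt.tendsto
  refine le_of_tendsto ht ?_
  filter_upwards [self_mem_nhdsWithin] with x hx using hle x hx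

/-- The set associated to a level `u`. -/
noncomputable def sklarS (ν : MeasureTheory.Measure ℝ) (u : ℝ) : Set ℝ :=
  if u ≤ 0 then ∅ else if 1 ≤ u then Set.univ else Set.Iic (sklarQ ν u)

lemma sklarS_measurable (ν : Measure ℝ) (u : ℝ) : MeasurableSet (sklarS ν u) := by
  unfold sklarS; split_ifs <;> measurability

lemma sklarS_mono (ν : Measure ℝ) [IsProbabilityMeasure ν]
    {u v : ℝ} (huv : u ≤ v) : sklarS ν u ⊆ sklarS ν v := by
  unfold sklarS
  by_cases h1 : u ≤ 0
  · simp [h1]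
  rw [if_neg h1, if_neg (by linarith : ¬ v ≤ 0)]
  by_cases h2 : 1 ≤ u
  · rw [if_pos h2, if_pos (by linarith)]
  rw [if_neg h2]
  by_cases h3 : 1 ≤ v
  · rw [if_pos h3]; exact subset_univ _
  rw [if_neg h3]
  exact Set.Iic_subset_Iic.mpr (sklarQ_mono ν (by linarith) (by linarith) huv)

lemma sklarS_cdf (ν : Measure ℝ) [IsProbabilityMeasure ν]
    (hcont : Continuous fun x => (ν (Set.Iic x)).toReal)
    {u : ℝ} (hu : u ∈ Set.Icc (0:ℝ) 1) :
    (ν (sklarS ν u)).toReal = u := by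
  unfold sklarS
  rcases eq_or_lt_of_le hu.1 with h0 | h0
  · rw [if_pos (le_of_eq h0.symm)]; simp [← h0]
  rcases eq_or_lt_of_le hu.2 with h1 | h1
  · rw [if_neg (by linarith), if_pos h1.ge, h1]; simp
  rw [if_neg (by linarith), if_neg (by linarith)]
  exact sklarQ_cdf ν hcont h0 h1

lemma sklar_prod_split_left (m : Measure (ℝ × ℝ)) {A₁ A₂ B : Set ℝ} (h : A₁ ⊆ A₂)
    (hA₁ : MeasurableSet A₁) (hA₂ : MeasurableSet A₂) (hB : MeasurableSet B) :
    m (A₂ ×ˢ B) = m (A₁ ×ˢ B) + m ((A₂ \ A₁) ×ˢ B) := by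
  rw [← Set.union_diff_cancel h, Set.union_prod]
  rw [Set.union_diff_cancel h]
  exact measure_union (Disjoint.set_prod_left disjoint_sdiff_self_right _ _)
    ((hA₂.diff hA₁).prod hB)

lemma sklar_prod_split_right (m : Measure (ℝ × ℝ)) {A B₁ B₂ : Set ℝ} (h : B₁ ⊆ B₂)
    (hA : MeasurableSet A) (hB₁ : MeasurableSet B₁) (hB₂ : MeasurableSet B₂) :
    m (A ×ˢ B₂) = m (A ×ˢ B₁) + m (A ×ˢ (B₂ \ B₁)) := by
  rw [← Set.union_diff_cancel h, Set.prod_union]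
  rw [Set.union_diff_cancel h]
  exact measure_union (Disjoint.set_prod_right disjoint_sdiff_self_right _ _)
    (hA.prod (hB₂.diff hB₁))

lemma sklar_slab_left (μ : Measure (ℝ × ℝ)) [IsProbabilityMeasure μ] {x x' : ℝ} {B : Set ℝ}
    (hB : MeasurableSet B)
    (hxx : μ (Set.Iic x ×ˢ (Set.univ : Set ℝ)) = μ (Set.Iic x' ×ˢ (Set.univ : Set ℝ))) :
    μ (Set.Iic x ×ˢ B) = μ (Set.Iic x' ×ˢ B) := by
  -- helper for the ordered case
  have key : ∀ a b : ℝ, a ≤ b →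
      μ (Set.Iic a ×ˢ (Set.univ : Set ℝ)) = μ (Set.Iic b ×ˢ (Set.univ : Set ℝ)) →
      μ (Set.Iic a ×ˢ B) = μ (Set.Iic b ×ˢ B) := by
    intro a b hab heq
    have hsub : Set.Iic a ⊆ Set.Iic b := Set.Iic_subset_Iic.mpr hab
    have h1 := sklar_prod_split_left μ hsub measurableSet_Iic measurableSet_Iic
      (MeasurableSet.univ)
    have h2 := sklar_prod_split_left μ hsub measurableSet_Iic measurableSet_Iic hB
    have hzero : μ ((Set.Iic b \ Set.Iic a) ×ˢ (Set.univ : Set ℝ)) = 0 := by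
      have hfin : μ (Set.Iic a ×ˢ (Set.univ : Set ℝ)) ≠ ⊤ := measure_ne_top μ _
      have : μ (Set.Iic a ×ˢ (Set.univ : Set ℝ)) + 0 =
          μ (Set.Iic a ×ˢ (Set.univ : Set ℝ)) + μ ((Set.Iic b \ Set.Iic a) ×ˢ (Set.univ : Set ℝ)) := by
        rw [add_zero, ← h1, ← heq]
      exact ((ENNReal.add_right_inj hfin).mp this).symm
    have hzero' : μ ((Set.Iic b \ Set.Iic a) ×ˢ B) = 0 :=
      le_antisymm (le_trans (measure_mono (Set.prod_mono_right (Set.subset_univ B)))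
        hzero.le) (zero_le)
    rw [h2, hzero', add_zero]
  rcases le_total x x' with h | h
  · exact key x x' h hxx
  · exact (key x' x h hxx.symm).symm

lemma sklar_slab_right (μ : Measure (ℝ × ℝ)) [IsProbabilityMeasure μ] {y y' : ℝ} {A : Set ℝ}
    (hA : MeasurableSet A)
    (hyy : μ ((Set.univ : Set ℝ) ×ˢ Set.Iic y) = μ ((Set.univ : Set ℝ) ×ˢ Set.Iic y')) :
    μ (A ×ˢ Set.Iic y) = μ (A ×ˢ Set.Iic y') := by
  have key : ∀ a b : ℝ, a ≤ b →
      μ ((Set.univ : Set ℝ) ×ˢ Set.Iic a) = μ ((Set.univ : Set ℝ) ×ˢ Set.Iic b) →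
      μ (A ×ˢ Set.Iic a) = μ (A ×ˢ Set.Iic b) := by
    intro a b hab heq
    have hsub : Set.Iic a ⊆ Set.Iic b := Set.Iic_subset_Iic.mpr hab
    have h1 := sklar_prod_split_right μ hsub (MeasurableSet.univ) measurableSet_Iic
      measurableSet_Iic
    have h2 := sklar_prod_split_right μ hsub hA measurableSet_Iic measurableSet_Iic
    have hzero : μ ((Set.univ : Set ℝ) ×ˢ (Set.Iic b \ Set.Iic a)) = 0 := by
      have hfin : μ ((Set.univ : Set ℝ) ×ˢ Set.Iic a) ≠ ⊤ := measure_ne_top μ _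
      have : μ ((Set.univ : Set ℝ) ×ˢ Set.Iic a) + 0 =
          μ ((Set.univ : Set ℝ) ×ˢ Set.Iic a) + μ ((Set.univ : Set ℝ) ×ˢ (Set.Iic b \ Set.Iic a)) := by
        rw [add_zero, ← h1, ← heq]
      exact ((ENNReal.add_right_inj hfin).mp this).symm
    have hzero' : μ (A ×ˢ (Set.Iic b \ Set.Iic a)) = 0 :=
      le_antisymm (le_trans (measure_mono (Set.prod_mono_left (Set.subset_univ A)))
        hzero.le) (zero_le)
    rw [h2, hzero', add_zero]
  rcases le_total y y' with h | h
  · exact key y y' h hyy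
  · exact (key y' y h hyy.symm).symm

lemma sklar_map_fst (μ : Measure (ℝ × ℝ)) {A : Set ℝ} (hA : MeasurableSet A) :
    (μ.map Prod.fst) A = μ (A ×ˢ (Set.univ : Set ℝ)) := by
  rw [Measure.map_apply measurable_fst hA, Set.prod_univ]

lemma sklar_map_snd (μ : Measure (ℝ × ℝ)) {B : Set ℝ} (hB : MeasurableSet B) :
    (μ.map Prod.snd) B = μ ((Set.univ : Set ℝ) ×ˢ B) := by
  rw [Measure.map_apply measurable_snd hB, Set.univ_prod]

lemma sklar_replace_left (μ : Measure (ℝ × ℝ)) [IsProbabilityMeasure μ]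
    (hcont : Continuous fun x => ((μ.map Prod.fst) (Set.Iic x)).toReal)
    (x : ℝ) {B : Set ℝ} (hB : MeasurableSet B) :
    μ (Set.Iic x ×ˢ B) =
      μ (sklarS (μ.map Prod.fst) ((μ (Set.Iic x ×ˢ (Set.univ : Set ℝ))).toReal) ×ˢ B) := by
  set ν := μ.map Prod.fst with hν
  haveI : IsProbabilityMeasure ν := Measure.isProbabilityMeasure_map measurable_fst.aemeasurable
  set u := (μ (Set.Iic x ×ˢ (Set.univ : Set ℝ))).toReal with hu
  have huν : u = (ν (Set.Iic x)).toReal := by rw [hu, sklar_map_fst μ measurableSet_Iic]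
  have hu0 : 0 ≤ u := ENNReal.toReal_nonneg
  have hu1 : u ≤ 1 := by
    rw [huν]; exact ENNReal.toReal_le_of_le_ofReal one_pos.le (by simpa using prob_le_one)
  unfold sklarS
  by_cases h0 : u ≤ 0
  · rw [if_pos h0, Set.empty_prod, measure_empty]
    have : ν (Set.Iic x) = 0 := by
      have ht0 : (ν (Set.Iic x)).toReal = 0 := by rw [← huν]; linarith
      exact ((ENNReal.toReal_eq_zero_iff _).mp ht0).resolve_right (measure_ne_top ν _)
    rw [sklar_map_fst μ measurableSet_Iic] at this
    exact le_antisymm (le_trans (measure_mono (Set.prod_mono_right (Set.subset_univ B))) this.le)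
      (zero_le)
  by_cases h1 : 1 ≤ u
  · rw [if_neg h0, if_pos h1]
    have hone : ν (Set.Iic x) = 1 := by
      have hteq : (ν (Set.Iic x)).toReal = 1 := by rw [← huν]; linarith
      rw [← ENNReal.ofReal_toReal (measure_ne_top ν _), hteq]; simp
    have hsplit := sklar_prod_split_left μ (Set.subset_univ (Set.Iic x)) measurableSet_Iic
      MeasurableSet.univ MeasurableSet.univ
    have htot : μ ((Set.univ : Set ℝ) ×ˢ (Set.univ : Set ℝ)) = 1 := by
      rw [Set.univ_prod_univ]; exact measure_univ
    have hIic : μ (Set.Iic x ×ˢ (Set.univ : Set ℝ)) = 1 := by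
      rw [← sklar_map_fst μ measurableSet_Iic]; exact hone
    have hzero : μ (((Set.univ : Set ℝ) \ Set.Iic x) ×ˢ (Set.univ : Set ℝ)) = 0 := by
      have : (1 : ℝ≥0∞) + 0 = 1 + μ (((Set.univ : Set ℝ) \ Set.Iic x) ×ˢ (Set.univ : Set ℝ)) := by
        rw [add_zero, ← hIic, ← hsplit, htot]; exact hIic
      exact ((ENNReal.add_right_inj ENNReal.one_ne_top).mp this).symm
    have hsplitB := sklar_prod_split_left μ (Set.subset_univ (Set.Iic x)) measurableSet_Iic
      MeasurableSet.univ hB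
    have hzeroB : μ (((Set.univ : Set ℝ) \ Set.Iic x) ×ˢ B) = 0 :=
      le_antisymm (le_trans (measure_mono (Set.prod_mono_right (Set.subset_univ B))) hzero.le)
        (zero_le)
    rw [hsplitB, hzeroB, add_zero]
  · rw [if_neg h0, if_neg h1]
    push_neg at h0 h1
    have hq := sklarQ_cdf ν hcont h0 h1
    refine sklar_slab_left μ hB ?_
    rw [← sklar_map_fst μ measurableSet_Iic, ← sklar_map_fst μ measurableSet_Iic]
    rw [← ENNReal.ofReal_toReal (measure_ne_top ν (Set.Iic x)),
      ← ENNReal.ofReal_toReal (measure_ne_top ν (Set.Iic (sklarQ ν u))), hq, ← huν]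

lemma sklar_replace_right (μ : Measure (ℝ × ℝ)) [IsProbabilityMeasure μ]
    (hcont : Continuous fun y => ((μ.map Prod.snd) (Set.Iic y)).toReal)
    (y : ℝ) {A : Set ℝ} (hA : MeasurableSet A) :
    μ (A ×ˢ Set.Iic y) =
      μ (A ×ˢ sklarS (μ.map Prod.snd) ((μ ((Set.univ : Set ℝ) ×ˢ Set.Iic y)).toReal)) := by
  set ν := μ.map Prod.snd with hν
  haveI : IsProbabilityMeasure ν := Measure.isProbabilityMeasure_map measurable_snd.aemeasurable
  set u := (μ ((Set.univ : Set ℝ) ×ˢ Set.Iic y)).toReal with hu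
  have huν : u = (ν (Set.Iic y)).toReal := by rw [hu, sklar_map_snd μ measurableSet_Iic]
  have hu0 : 0 ≤ u := ENNReal.toReal_nonneg
  have hu1 : u ≤ 1 := by
    rw [huν]; exact ENNReal.toReal_le_of_le_ofReal one_pos.le (by simpa using prob_le_one)
  unfold sklarS
  by_cases h0 : u ≤ 0
  · rw [if_pos h0, Set.prod_empty, measure_empty]
    have : ν (Set.Iic y) = 0 := by
      have ht0 : (ν (Set.Iic y)).toReal = 0 := by rw [← huν]; linarith
      exact ((ENNReal.toReal_eq_zero_iff _).mp ht0).resolve_right (measure_ne_top ν _)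
    rw [sklar_map_snd μ measurableSet_Iic] at this
    exact le_antisymm (le_trans (measure_mono (Set.prod_mono_left (Set.subset_univ A))) this.le)
      (zero_le)
  by_cases h1 : 1 ≤ u
  · rw [if_neg h0, if_pos h1]
    have hone : ν (Set.Iic y) = 1 := by
      have hteq : (ν (Set.Iic y)).toReal = 1 := by rw [← huν]; linarith
      rw [← ENNReal.ofReal_toReal (measure_ne_top ν _), hteq]; simp
    have hsplit := sklar_prod_split_right μ (Set.subset_univ (Set.Iic y)) MeasurableSet.univ
      measurableSet_Iic MeasurableSet.univ
    have htot : μ ((Set.univ : Set ℝ) ×ˢ (Set.univ : Set ℝ)) = 1 := by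
      rw [Set.univ_prod_univ]; exact measure_univ
    have hIic : μ ((Set.univ : Set ℝ) ×ˢ Set.Iic y) = 1 := by
      rw [← sklar_map_snd μ measurableSet_Iic]; exact hone
    have hzero : μ ((Set.univ : Set ℝ) ×ˢ ((Set.univ : Set ℝ) \ Set.Iic y)) = 0 := by
      have : (1 : ℝ≥0∞) + 0 = 1 + μ ((Set.univ : Set ℝ) ×ˢ ((Set.univ : Set ℝ) \ Set.Iic y)) := by
        rw [add_zero, ← hIic, ← hsplit, htot]; exact hIic
      exact ((ENNReal.add_right_inj ENNReal.one_ne_top).mp this).symm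
    have hsplitA := sklar_prod_split_right μ (Set.subset_univ (Set.Iic y)) hA measurableSet_Iic
      MeasurableSet.univ
    have hzeroA : μ (A ×ˢ ((Set.univ : Set ℝ) \ Set.Iic y)) = 0 :=
      le_antisymm (le_trans (measure_mono (Set.prod_mono_left (Set.subset_univ A))) hzero.le)
        (zero_le)
    rw [hsplitA, hzeroA, add_zero]
  · rw [if_neg h0, if_neg h1]
    push_neg at h0 h1
    have hq := sklarQ_cdf ν hcont h0 h1
    refine sklar_slab_right μ hA ?_
    rw [← sklar_map_snd μ measurableSet_Iic, ← sklar_map_snd μ measurableSet_Iic]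
    rw [← ENNReal.ofReal_toReal (measure_ne_top ν (Set.Iic y)),
      ← ENNReal.ofReal_toReal (measure_ne_top ν (Set.Iic (sklarQ ν u))), hq, ← huν]

lemma sklar_four (μ : Measure (ℝ × ℝ)) [IsProbabilityMeasure μ] {A₁ A₂ B₁ B₂ : Set ℝ}
    (hA : A₁ ⊆ A₂) (hB : B₁ ⊆ B₂) (hA₁ : MeasurableSet A₁) (hA₂ : MeasurableSet A₂)
    (hB₁ : MeasurableSet B₁) (hB₂ : MeasurableSet B₂) :
    0 ≤ (μ (A₂ ×ˢ B₂)).toReal - (μ (A₂ ×ˢ B₁)).toReal - (μ (A₁ ×ˢ B₂)).toReal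
      + (μ (A₁ ×ˢ B₁)).toReal := by
  have e1 := sklar_prod_split_right μ hB hA₂ hB₁ hB₂
  have e2 := sklar_prod_split_left μ hA hA₁ hA₂ (hB₂.diff hB₁)
  have e3 := sklar_prod_split_right μ hB hA₁ hB₁ hB₂
  have t1 : (μ (A₂ ×ˢ B₂)).toReal = (μ (A₂ ×ˢ B₁)).toReal + (μ (A₂ ×ˢ (B₂ \ B₁))).toReal := by
    rw [e1, ENNReal.toReal_add (measure_ne_top μ _) (measure_ne_top μ _)]
  have t2 : (μ (A₂ ×ˢ (B₂ \ B₁))).toReal =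
      (μ (A₁ ×ˢ (B₂ \ B₁))).toReal + (μ ((A₂ \ A₁) ×ˢ (B₂ \ B₁))).toReal := by
    rw [e2, ENNReal.toReal_add (measure_ne_top μ _) (measure_ne_top μ _)]
  have t3 : (μ (A₁ ×ˢ B₂)).toReal = (μ (A₁ ×ˢ B₁)).toReal + (μ (A₁ ×ˢ (B₂ \ B₁))).toReal := by
    rw [e3, ENNReal.toReal_add (measure_ne_top μ _) (measure_ne_top μ _)]
  have hnn : 0 ≤ (μ ((A₂ \ A₁) ×ˢ (B₂ \ B₁))).toReal := ENNReal.toReal_nonneg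
  linarith

/-- Sklar's theorem (bivariate case, continuous margins): if `μ` is a probability
measure on `ℝ × ℝ` with joint distribution function `H` and continuous marginal
distribution functions `F` and `G`, then there is a copula `C`, unique on
`[0,1]²`, such that `H(x,y) = C(F(x), G(y))` for all `(x,y)`. -/
theorem sklar_bivariate (μ : MeasureTheory.Measure (ℝ × ℝ))
    [MeasureTheory.IsProbabilityMeasure μ] (F G : ℝ → ℝ)
    (hF : ∀ x, F x = (μ (Set.Iic x ×ˢ (Set.univ : Set ℝ))).toReal)
    (hG : ∀ y, G y = (μ ((Set.univ : Set ℝ) ×ˢ Set.Iic y)).toReal)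
    (hFcont : Continuous F) (hGcont : Continuous G) :
    ∃ C : ℝ → ℝ → ℝ, IsCopula C ∧
      (∀ x y : ℝ, (μ (Set.Iic x ×ˢ Set.Iic y)).toReal = C (F x) (G y)) ∧
      ∀ C' : ℝ → ℝ → ℝ, IsCopula C' →
        (∀ x y : ℝ, (μ (Set.Iic x ×ˢ Set.Iic y)).toReal = C' (F x) (G y)) →
        ∀ u ∈ Set.Icc (0:ℝ) 1, ∀ v ∈ Set.Icc (0:ℝ) 1, C' u v = C u v := by
    classical
  have hν₁ : IsProbabilityMeasure (μ.map Prod.fst) :=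
    Measure.isProbabilityMeasure_map measurable_fst.aemeasurable
  have hν₂ : IsProbabilityMeasure (μ.map Prod.snd) :=
    Measure.isProbabilityMeasure_map measurable_snd.aemeasurable
  set ν₁ := μ.map Prod.fst with hν₁def
  set ν₂ := μ.map Prod.snd with hν₂def
  have hFν : ∀ x, F x = (ν₁ (Set.Iic x)).toReal := fun x => by
    rw [hF x, sklar_map_fst μ measurableSet_Iic]
  have hGν : ∀ y, G y = (ν₂ (Set.Iic y)).toReal := fun y => by
    rw [hG y, sklar_map_snd μ measurableSet_Iic]
  have hcont1 : Continuous fun x => (ν₁ (Set.Iic x)).toReal := by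
    have h : (fun x => (ν₁ (Set.Iic x)).toReal) = F := funext fun x => (hFν x).symm
    rw [h]; exact hFcont
  have hcont2 : Continuous fun y => (ν₂ (Set.Iic y)).toReal := by
    have h : (fun y => (ν₂ (Set.Iic y)).toReal) = G := funext fun y => (hGν y).symm
    rw [h]; exact hGcont
  set C : ℝ → ℝ → ℝ := fun u v => (μ (sklarS ν₁ u ×ˢ sklarS ν₂ v)).toReal with hCdef
  -- representation
  have hrep : ∀ x y : ℝ, (μ (Set.Iic x ×ˢ Set.Iic y)).toReal = C (F x) (G y) := by
    intro x y
    have h1 : μ (Set.Iic x ×ˢ Set.Iic y) = μ (sklarS ν₁ (F x) ×ˢ Set.Iic y) := by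
      have h := sklar_replace_left μ hcont1 x (B := Set.Iic y) measurableSet_Iic
      rw [← hF x] at h
      exact h
    have h2 : μ (sklarS ν₁ (F x) ×ˢ Set.Iic y) = μ (sklarS ν₁ (F x) ×ˢ sklarS ν₂ (G y)) := by
      have h := sklar_replace_right μ hcont2 y (A := sklarS ν₁ (F x)) (sklarS_measurable ν₁ _)
      rw [← hG y] at h
      exact h
    rw [h1, h2]
  -- boundary values of C
  have hS0 : sklarS ν₁ (0:ℝ) = ∅ := by unfold sklarS; rw [if_pos le_rfl]
  have hT0 : sklarS ν₂ (0:ℝ) = ∅ := by unfold sklarS; rw [if_pos le_rfl]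
  have hS1 : sklarS ν₁ (1:ℝ) = Set.univ := by
    unfold sklarS; rw [if_neg (by norm_num), if_pos le_rfl]
  have hT1 : sklarS ν₂ (1:ℝ) = Set.univ := by
    unfold sklarS; rw [if_neg (by norm_num), if_pos le_rfl]
  have hC0v : ∀ v : ℝ, C 0 v = 0 := by
    intro v; rw [hCdef]; simp only [hS0, Set.empty_prod, measure_empty, ENNReal.toReal_zero]
  have hCu0 : ∀ u : ℝ, C u 0 = 0 := by
    intro u; rw [hCdef]; simp only [hT0, Set.prod_empty, measure_empty, ENNReal.toReal_zero]
  have hC1v : ∀ v ∈ Set.Icc (0:ℝ) 1, C 1 v = v := by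
    intro v hv
    rw [hCdef]
    simp only [hS1]
    rw [← sklar_map_snd μ (sklarS_measurable ν₂ v)]
    exact sklarS_cdf ν₂ hcont2 hv
  have hCu1 : ∀ u ∈ Set.Icc (0:ℝ) 1, C u 1 = u := by
    intro u hu
    rw [hCdef]
    simp only [hT1]
    rw [← sklar_map_fst μ (sklarS_measurable ν₁ u)]
    exact sklarS_cdf ν₁ hcont1 hu
  have hcop : IsCopula C := by
    refine ⟨?_, fun v _ => hC0v v, fun u _ => hCu0 u, hC1v, hCu1, ?_⟩
    · intro u _ v _
      constructor
      · exact ENNReal.toReal_nonneg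
      · exact ENNReal.toReal_le_of_le_ofReal one_pos.le (by simpa using prob_le_one)
    · intro u₁ _ u₂ _ v₁ _ v₂ _ hu hv
      exact sklar_four μ (sklarS_mono ν₁ hu) (sklarS_mono ν₂ hv)
        (sklarS_measurable ν₁ _) (sklarS_measurable ν₁ _)
        (sklarS_measurable ν₂ _) (sklarS_measurable ν₂ _)
  refine ⟨C, hcop, hrep, ?_⟩
  -- uniqueness
  intro C' hC' hrep' u hu v hv
  rcases eq_or_lt_of_le hu.1 with h0u | h0u
  · rw [← h0u, hC'.2.1 v hv, hC0v v]
  rcases eq_or_lt_of_le hu.2 with h1u | h1u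
  · rw [h1u, hC'.2.2.2.1 v hv, hC1v v hv]
  rcases eq_or_lt_of_le hv.1 with h0v | h0v
  · rw [← h0v, hC'.2.2.1 u hu, hCu0 u]
  rcases eq_or_lt_of_le hv.2 with h1v | h1v
  · rw [h1v, hC'.2.2.2.2.1 u hu, hCu1 u hu]
  · have hFx : F (sklarQ ν₁ u) = u := by
      rw [hFν]; exact sklarQ_cdf ν₁ hcont1 h0u h1u
    have hGy : G (sklarQ ν₂ v) = v := by
      rw [hGν]; exact sklarQ_cdf ν₂ hcont2 h0v h1v
    calc C' u v = C' (F (sklarQ ν₁ u)) (G (sklarQ ν₂ v)) := by rw [hFx, hGy]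
      _ = (μ (Set.Iic (sklarQ ν₁ u) ×ˢ Set.Iic (sklarQ ν₂ v))).toReal :=
          (hrep' (sklarQ ν₁ u) (sklarQ ν₂ v)).symm
      _ = C (F (sklarQ ν₁ u)) (G (sklarQ ν₂ v)) := hrep _ _
      _ = C u v := by rw [hFx, hGy]
end
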